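/- arXiv:2501.09435 — 10 statements merged into one kernel-verified Lean document; each statement's English description precedes it below -/
import Mathlib

section
/- The Diophantine equation x₁² + x₂² + 1 = k·x₁·x₂ has a positive integer solution (x₁, x₂) if and only if k = 3. -/
/-!
Vieta jumping: for a fixed `k`, the equation is quadratic in `x₂` with root sum `k * x₁` and
root product `x₁ ^ 2 + 1`, so a solution with `x₁ < x₂` yields the smaller solution
`(k * x₁ - x₂, x₁)`. Descent ends at a solution with `x₁ = x₂`; there `x₁ ∣ 1`, so `x₁ = 1` and `k = 3`.
-/

theorem eq_three_of_sq_add_sq_add_one_eq_mul_self {k x : ℕ} (h : x ^ 2 + x ^ 2 + 1 = k * x * x) :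
    k = 3 := by
  have hx : x ∣ 1 := by
    have hdvd : x ∣ k * x * x - (x ^ 2 + x ^ 2) := Nat.dvd_sub (dvd_mul_left x _) ⟨2 * x, by ring⟩
    rwa [← h, Nat.add_sub_cancel_left] at hdvd
  rw [Nat.dvd_one.mp hx] at h
  omega

theorem exists_vieta_jump {k x₁ x₂ : ℕ} (hlt : x₁ < x₂) (h : x₁ ^ 2 + x₂ ^ 2 + 1 = k * x₁ * x₂) :
    ∃ y ≤ x₁, y ^ 2 + x₁ ^ 2 + 1 = k * y * x₁ := by
  have hx₁ : 0 < x₁ := Nat.pos_of_ne_zero (by rintro rfl; simp at h)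
  have hkx : x₂ < k * x₁ := Nat.lt_of_mul_lt_mul_right (a := x₂) (by nlinarith)
  obtain ⟨y, hy⟩ : ∃ y, x₂ + y = k * x₁ := ⟨k * x₁ - x₂, by omega⟩
  have hprod : x₂ * y = x₁ ^ 2 + 1 := by nlinarith
  have hyx : x₂ * y ≤ x₂ * x₁ := by nlinarith
  exact ⟨y, le_of_mul_le_mul_left hyx (by omega), by nlinarith⟩

theorem eq_three_of_sq_add_sq_add_one_eq_mul {k x₁ x₂ : ℕ}
    (h : x₁ ^ 2 + x₂ ^ 2 + 1 = k * x₁ * x₂) : k = 3 := by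
  induction hn : x₁ + x₂ using Nat.strong_induction_on generalizing x₁ x₂ with
  | _ n ih =>
  wlog hle : x₁ ≤ x₂ generalizing x₁ x₂
  · exact this (x₁ := x₂) (x₂ := x₁) (by linarith) (by omega) (by omega)
  rcases hle.eq_or_lt with rfl | hlt
  · exact eq_three_of_sq_add_sq_add_one_eq_mul_self h
  · obtain ⟨y, hy, hy_eq⟩ := exists_vieta_jump hlt h
    exact ih (y + x₁) (by omega) hy_eq rfl

theorem stmt_0 (k : ℕ) :
    (∃ x₁ x₂ : ℕ, 0 < x₁ ∧ 0 < x₂ ∧ x₁ ^ 2 + x₂ ^ 2 + 1 = k * x₁ * x₂) ↔ k = 3 := by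
  constructor
  · rintro ⟨x₁, x₂, -, -, h⟩
    exact eq_three_of_sq_add_sq_add_one_eq_mul h
  · rintro rfl
    exact ⟨1, 1, one_pos, one_pos, by norm_num⟩
end

section
/- The Diophantine equation x₁² + x₂² + x₃² = k·x₁·x₂·x₃ has a positive integer solution (x₁, x₂, x₃) if and only if k = 1 or k = 3. -/
/-!
Vieta jumping: replacing `z` by the other root `k x y - z` of the equation, viewed as a quadratic
in `z`, gives another solution. In a solution of minimal sum with `z` maximal this jump cannot
decrease `z`, so `z² ≤ z (k x y - z) = x² + y²`, and then `k x y z ≤ 2 (x² + y²) ≤ 2 (x + y) z`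
forces `k ≤ 4`. For even `k` all three coordinates must be even (squares are `0` or `1` mod `4`),
and halving them gives a solution for `2 k`; two halvings lead to `4 k ≤ 4`, so `k` is odd.
-/

theorem ZMod.two_mul_eq_zero_of_sq_add_sq_add_sq_eq_two_mul {a b c w : ZMod 4}
    (h : a ^ 2 + b ^ 2 + c ^ 2 = 2 * w * a * b * c) : 2 * a = 0 ∧ 2 * b = 0 ∧ 2 * c = 0 := by
  revert a b c w
  decide

theorem two_dvd_of_two_mul_natCast_eq_zero {n : ℕ} (h : 2 * (n : ZMod 4) = 0) : 2 ∣ n := by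
  have h : ((2 * n : ℕ) : ZMod 4) = 0 := by
    push_cast
    exact h
  rw [ZMod.natCast_eq_zero_iff] at h
  exact (Nat.mul_dvd_mul_iff_left two_pos).mp h

def IsMarkovTriple (k x y z : ℕ) : Prop :=
  0 < x ∧ 0 < y ∧ 0 < z ∧ x ^ 2 + y ^ 2 + z ^ 2 = k * x * y * z

namespace IsMarkovTriple

variable {k x y z : ℕ}

theorem rotate (h : IsMarkovTriple k x y z) : IsMarkovTriple k y z x := by
  obtain ⟨hx, hy, hz, h⟩ := h
  exact ⟨hy, hz, hx, by linear_combination h⟩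

theorem k_pos (h : IsMarkovTriple k x y z) : 0 < k := by
  obtain ⟨hx, -, -, h⟩ := h
  rcases Nat.eq_zero_or_pos k with rfl | hk
  · simp only [zero_mul] at h
    nlinarith
  · exact hk

theorem le_k_mul_mul (h : IsMarkovTriple k x y z) : z ≤ k * x * y := by
  obtain ⟨-, -, hz, h⟩ := h
  by_contra! hlt
  nlinarith [Nat.mul_lt_mul_of_pos_right hlt hz]

theorem mul_vieta_partner (h : IsMarkovTriple k x y z) : z * (k * x * y - z) = x ^ 2 + y ^ 2 := by
  have hle := h.le_k_mul_mul
  obtain ⟨-, -, -, h⟩ := h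
  zify [hle] at h ⊢
  linear_combination -h

theorem vieta_jump (h : IsMarkovTriple k x y z) : IsMarkovTriple k x y (k * x * y - z) := by
  have hle := h.le_k_mul_mul
  have hpartner := h.mul_vieta_partner
  obtain ⟨hx, hy, -, -⟩ := h
  refine ⟨hx, hy, Nat.pos_of_ne_zero fun h0 => ?_, ?_⟩
  · rw [h0, mul_zero] at hpartner
    nlinarith
  · zify [hle] at hpartner ⊢
    linear_combination -hpartner

theorem k_le_four_of_reduced (h : IsMarkovTriple k x y z) (hxz : x ≤ z) (hyz : y ≤ z)
    (hreduced : z ≤ k * x * y - z) : k ≤ 4 := by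
  have hpartner := h.mul_vieta_partner
  obtain ⟨hx, hy, hz, h⟩ := h
  have hsq : z ^ 2 ≤ x ^ 2 + y ^ 2 :=
    calc z ^ 2 = z * z := sq z
      _ ≤ z * (k * x * y - z) := Nat.mul_le_mul_left z hreduced
      _ = x ^ 2 + y ^ 2 := hpartner
  have hkxy : k * x * y ≤ 2 * (x + y) := by
    refine Nat.le_of_mul_le_mul_right ?_ hz
    nlinarith [Nat.mul_le_mul_left x hxz, Nat.mul_le_mul_left y hyz]
  by_contra! hk
  nlinarith [Nat.mul_le_mul_right y hk, Nat.mul_le_mul hx hy]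

theorem exists_rotation_le (h : IsMarkovTriple k x y z) :
    ∃ a b c, IsMarkovTriple k a b c ∧ a + b + c = x + y + z ∧ a ≤ c ∧ b ≤ c := by
  rcases le_total x z with hxz | hzx <;> rcases le_total y z with hyz | hzy <;>
    rcases le_total x y with hxy | hyx
  all_goals first
    | exact ⟨x, y, z, h, rfl, by omega, by omega⟩
    | exact ⟨y, z, x, h.rotate, by omega, by omega, by omega⟩
    | exact ⟨z, x, y, h.rotate.rotate, by omega, by omega, by omega⟩

theorem k_le_four (h : IsMarkovTriple k x y z) : k ≤ 4 := by
  induction hs : x + y + z using Nat.strong_induction_on generalizing x y z with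
  | _ s ih =>
  obtain ⟨a, b, c, habc, hsum, hac, hbc⟩ := h.exists_rotation_le
  by_cases hreduced : c ≤ k * a * b - c
  · exact habc.k_le_four_of_reduced hac hbc hreduced
  · exact ih _ (by omega) habc.vieta_jump rfl

theorem two_dvd (h : IsMarkovTriple k x y z) (hk : 2 ∣ k) : 2 ∣ x ∧ 2 ∣ y ∧ 2 ∣ z := by
  obtain ⟨k, rfl⟩ := hk
  obtain ⟨-, -, -, h⟩ := h
  have hmod := congrArg (Nat.cast : ℕ → ZMod 4) h
  push_cast at hmod
  obtain ⟨hx, hy, hz⟩ := ZMod.two_mul_eq_zero_of_sq_add_sq_add_sq_eq_two_mul hmod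
  exact ⟨two_dvd_of_two_mul_natCast_eq_zero hx, two_dvd_of_two_mul_natCast_eq_zero hy,
    two_dvd_of_two_mul_natCast_eq_zero hz⟩

theorem of_two_mul {a b c : ℕ} (h : IsMarkovTriple k (2 * a) (2 * b) (2 * c)) :
    IsMarkovTriple (2 * k) a b c := by
  obtain ⟨ha, hb, hc, h⟩ := h
  refine ⟨by omega, by omega, by omega, Nat.eq_of_mul_eq_mul_left (by norm_num : 0 < 4) ?_⟩
  calc 4 * (a ^ 2 + b ^ 2 + c ^ 2) = (2 * a) ^ 2 + (2 * b) ^ 2 + (2 * c) ^ 2 := by ring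
    _ = k * (2 * a) * (2 * b) * (2 * c) := h
    _ = 4 * (2 * k * a * b * c) := by ring

theorem exists_of_two_dvd (h : IsMarkovTriple k x y z) (hk : 2 ∣ k) :
    ∃ a b c, IsMarkovTriple (2 * k) a b c := by
  obtain ⟨⟨a, rfl⟩, ⟨b, rfl⟩, ⟨c, rfl⟩⟩ := h.two_dvd hk
  exact ⟨a, b, c, of_two_mul h⟩

end IsMarkovTriple

theorem stmt_1 (k : ℕ) :
    (∃ x₁ x₂ x₃ : ℕ, 0 < x₁ ∧ 0 < x₂ ∧ 0 < x₃ ∧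
      x₁ ^ 2 + x₂ ^ 2 + x₃ ^ 2 = k * x₁ * x₂ * x₃) ↔ k = 1 ∨ k = 3 := by
  constructor
  · rintro ⟨x, y, z, h⟩
    have h : IsMarkovTriple k x y z := h
    have hk_odd : ¬ 2 ∣ k := by
      intro hk
      obtain ⟨_, _, _, h2k⟩ := h.exists_of_two_dvd hk
      obtain ⟨_, _, _, h4k⟩ := h2k.exists_of_two_dvd (dvd_mul_of_dvd_right hk 2)
      have := h4k.k_le_four
      have := h.k_pos
      omega
    have := h.k_le_four
    have := h.k_pos
    omega
  · rintro (rfl | rfl)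
    · exact ⟨3, 3, 3, by norm_num⟩
    · exact ⟨1, 1, 1, by norm_num⟩
end

section
/- The Diophantine equation x₂⁴ + x₁² + 2x₁ + 1 = k·x₁·x₂² has a positive integer solution (x₁, x₂) if and only if k = 5. -/
/-!
Since `x₂ ^ 4 + (x₁ + 1) ^ 2 = k x₁ x₂ ^ 2`, `x₂` divides `x₁ + 1`; writing `x₁ + 1 = x₂ m` and
dividing by `x₂ ^ 2` turns the equation into `x₂ ^ 2 + m ^ 2 + k = k x₂ m`. For this equation
Vieta jumping applies: replacing the larger coordinate `b` of a solution `(a, b)` by the other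
root `k a - b` of `t ^ 2 - k a t + a ^ 2 + k` gives a smaller positive solution unless `a = 1`,
and `1 + b ^ 2 + k = k b` factors as `(b - 1) (k - b - 1) = 2`, which forces `k = 5`.
-/

theorem three_le_of_sq_add_sq_add_eq_mul {a b k : ℕ} (ha : 0 < a)
    (h : a ^ 2 + b ^ 2 + k = k * a * b) : 3 ≤ k := by
  by_contra! hk
  have hab : 2 * a * b ≤ a ^ 2 + b ^ 2 := by nlinarith [sq_nonneg ((a : ℤ) - b)]
  interval_cases k <;> nlinarith

theorem eq_five_of_one_add_sq_add_eq_mul {b k : ℕ} (h : 1 + b ^ 2 + k = k * b) : k = 5 := by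
  have hb : 2 ≤ b := by
    by_contra! hb
    interval_cases b <;> omega
  have hZ : (1 + b ^ 2 + k : ℤ) = k * b := by exact_mod_cast h
  have hfac : ((b : ℤ) - 1) * (k - b - 1) = 2 := by linear_combination -hZ
  have hb' : (2 : ℤ) ≤ b := by exact_mod_cast hb
  have hpos : (0 : ℤ) < k - b - 1 := by nlinarith
  have hb3 : b ≤ 3 := by
    suffices (b : ℤ) ≤ 3 by exact_mod_cast this
    nlinarith
  interval_cases b <;> omega

theorem exists_vieta_jump_lt {a b k : ℕ} (ha : 2 ≤ a) (hab : a ≤ b)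
    (h : a ^ 2 + b ^ 2 + k = k * a * b) :
    ∃ c : ℕ, 0 < c ∧ c < b ∧ a ^ 2 + c ^ 2 + k = k * a * c := by
  have hk := three_le_of_sq_add_sq_add_eq_mul (by omega) h
  have hZ : (a : ℤ) ^ 2 + b ^ 2 + k = k * a * b := by exact_mod_cast h
  have hprod : ((k : ℤ) * a - b) * b = a ^ 2 + k := by linear_combination -hZ
  have hpos : 0 < (k : ℤ) * a - b := by
    have : (0 : ℤ) < b := by exact_mod_cast (show 0 < b by omega)
    nlinarith
  obtain ⟨c, hc⟩ : ∃ c : ℕ, (c : ℤ) = k * a - b := ⟨_, Int.toNat_of_nonneg hpos.le⟩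
  refine ⟨c, by omega, ?_, ?_⟩
  · -- `b ≤ c` would put `a` below both roots `b, c`, but the quadratic is negative at `a`
    by_contra! hbc
    have hval : ((a : ℤ) - b) * (a - c) = 2 * a ^ 2 + k - k * a ^ 2 := by
      rw [hc]; linear_combination hprod
    have hnonneg : (0 : ℤ) ≤ ((a : ℤ) - b) * (a - c) :=
      mul_nonneg_of_nonpos_of_nonpos (by omega) (by omega)
    have ha' : (2 : ℤ) ≤ a := by exact_mod_cast ha
    have hk' : (3 : ℤ) ≤ k := by exact_mod_cast hk
    nlinarith
  · have : (a : ℤ) ^ 2 + c ^ 2 + k = k * a * c := by rw [hc]; linear_combination hZ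
    exact_mod_cast this

theorem eq_five_of_sq_add_sq_add_eq_mul {a b k : ℕ} (ha : 0 < a) (hb : 0 < b)
    (h : a ^ 2 + b ^ 2 + k = k * a * b) : k = 5 := by
  induction hn : a + b using Nat.strong_induction_on generalizing a b with
  | _ n ih =>
  wlog hab : a ≤ b generalizing a b
  · exact this hb ha (by linarith) (by omega) (by omega)
  obtain rfl | ha2 : a = 1 ∨ 2 ≤ a := by omega
  · exact eq_five_of_one_add_sq_add_eq_mul (by simpa using h)
  · obtain ⟨c, hc0, hcb, hc⟩ := exists_vieta_jump_lt ha2 hab h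
    exact ih (a + c) (by omega) ha hc0 hc rfl

theorem exists_sq_add_sq_add_eq_mul {x₁ x₂ k : ℕ} (hx₂ : 0 < x₂)
    (h : x₂ ^ 4 + x₁ ^ 2 + 2 * x₁ + 1 = k * x₁ * x₂ ^ 2) :
    ∃ m, 0 < m ∧ x₂ ^ 2 + m ^ 2 + k = k * x₂ * m := by
  have hsq : x₂ ^ 2 ∣ (x₁ + 1) ^ 2 :=
    (Nat.dvd_add_right (pow_dvd_pow x₂ (by norm_num : 2 ≤ 4))).mp
      ⟨k * x₁, by linear_combination h⟩
  obtain ⟨m, hm⟩ := (Nat.pow_dvd_pow_iff two_ne_zero).mp hsq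
  refine ⟨m, Nat.pos_of_ne_zero (by rintro rfl; omega), ?_⟩
  apply Nat.eq_of_mul_eq_mul_left (pow_pos hx₂ 2)
  calc x₂ ^ 2 * (x₂ ^ 2 + m ^ 2 + k) = x₂ ^ 4 + (x₂ * m) ^ 2 + k * x₂ ^ 2 := by ring
    _ = k * (x₁ + 1) * x₂ ^ 2 := by rw [← hm]; linear_combination h
    _ = x₂ ^ 2 * (k * x₂ * m) := by rw [hm]; ring

theorem stmt_2 (k : ℕ) :
    (∃ x₁ x₂ : ℕ, 0 < x₁ ∧ 0 < x₂ ∧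
      x₂ ^ 4 + x₁ ^ 2 + 2 * x₁ + 1 = k * x₁ * x₂ ^ 2) ↔ k = 5 := by
  constructor
  · rintro ⟨x₁, x₂, -, hx₂, h⟩
    obtain ⟨m, hm, hm_eq⟩ := exists_sq_add_sq_add_eq_mul hx₂ h
    exact eq_five_of_sq_add_sq_add_eq_mul hx₂ hm hm_eq
  · rintro rfl
    exact ⟨2, 1, by norm_num⟩
end

section
/- The Diophantine equation x₁² + x₂⁴ + x₃⁴ + 2x₁x₂² + 2x₁x₃² = k·x₁·x₂²·x₃² has a positive integer solution (x₁, x₂, x₃) if and only if k = 7. -/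
/-!
Since `(x + y² + z²)² = (k x + 2) y² z²`, the quotient `t = (x + y² + z²) / (y z)` is an integer
with `t y z = x + y² + z²` and `t² = k x + 2`. The Vieta involutions `y ↦ t z - y`, `z ↦ t y - z` and
`t ↦ t' = k y z - t` (which moves `x` to `x'` with `x x' = y⁴ + z⁴`) preserve these equations and
positivity, so descent on `y + z + t` yields a solution with `z ≤ y`, `2 y ≤ t z` and `t ≤ t'`.
There `(2 y - t z) (2 y - t' z) = (k z² - 2) z² - (k z² - 4) y²` is non-negative, while
`(k z² - 4) x = (t z - 2 y)² + 2 z²` forces `k z² > 4`; together they leave only `y = z`.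
Then `u = t - 2` satisfies `u (k z² - 4 - u) = 2`, so `k z² = 7`.
-/

/-- A positive solution `(x, y, z)` together with `t = (x + y² + z²) / (y z)`. -/
structure IsSolution (k x y z t : ℤ) : Prop where
  x_pos : 0 < x
  y_pos : 0 < y
  z_pos : 0 < z
  mul_eq : t * y * z = x + y ^ 2 + z ^ 2
  sq_eq : t ^ 2 = k * x + 2

theorem exists_isSolution {k x y z : ℕ} (hx : 0 < x) (hy : 0 < y) (hz : 0 < z)
    (h : x ^ 2 + y ^ 4 + z ^ 4 + 2 * x * y ^ 2 + 2 * x * z ^ 2 = k * x * y ^ 2 * z ^ 2) :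
    ∃ t : ℤ, IsSolution k x y z t := by
  have hsq : ((x : ℤ) + y ^ 2 + z ^ 2) ^ 2 = ((y : ℤ) * z) ^ 2 * (k * x + 2) := by
    have hZ : ((x : ℤ) ^ 2 + y ^ 4 + z ^ 4 + 2 * x * y ^ 2 + 2 * x * z ^ 2 : ℤ)
        = k * x * y ^ 2 * z ^ 2 := by exact_mod_cast h
    linear_combination hZ
  obtain ⟨t, ht⟩ : (y : ℤ) * z ∣ x + y ^ 2 + z ^ 2 :=
    (Int.pow_dvd_pow_iff two_ne_zero).mp ⟨_, hsq⟩
  have hyz : ((y : ℤ) * z) ^ 2 ≠ 0 := by positivity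
  refine ⟨t, by exact_mod_cast hx, by exact_mod_cast hy, by exact_mod_cast hz,
    by linear_combination -ht, ?_⟩
  rw [ht, mul_pow] at hsq
  exact mul_left_cancel₀ hyz hsq

theorem mul_sq_lt_sub_mul_sq {k y z : ℤ} (hz : 0 < z) (hzy : z < y) (h4 : 4 < k * z ^ 2) :
    (k * z ^ 2 - 2) * z ^ 2 < (k * z ^ 2 - 4) * y ^ 2 := by
  have hk : 0 < k := pos_of_mul_pos_left (by linarith) (sq_nonneg z)
  have hy2 : (z + 1) ^ 2 ≤ y ^ 2 := by nlinarith
  suffices 2 * z ^ 2 < (k * z ^ 2 - 4) * (2 * z + 1) by nlinarith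
  by_contra! hle
  have hz4 : z ≤ 4 := by nlinarith
  interval_cases z <;> omega

namespace IsSolution

variable {k x y z t : ℤ}

theorem t_pos (h : IsSolution k x y z t) : 0 < t := by
  have hx := h.x_pos
  refine pos_of_mul_pos_left (b := y * z) ?_ (mul_pos h.y_pos h.z_pos).le
  nlinarith [h.mul_eq]

theorem swap (h : IsSolution k x y z t) : IsSolution k x z y t :=
  ⟨h.x_pos, h.z_pos, h.y_pos, by linear_combination h.mul_eq, h.sq_eq⟩

theorem jump_y (h : IsSolution k x y z t) : IsSolution k x (t * z - y) z t := by
  have hprod : y * (t * z - y) = x + z ^ 2 := by linear_combination h.mul_eq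
  have hx := h.x_pos
  refine ⟨h.x_pos, pos_of_mul_pos_right (a := y) (by nlinarith) h.y_pos.le, h.z_pos,
    by linear_combination h.mul_eq, h.sq_eq⟩

theorem jump_t (h : IsSolution k x y z t) :
    IsSolution k (k * y ^ 2 * z ^ 2 - x - 2 * y ^ 2 - 2 * z ^ 2) y z (k * y * z - t) := by
  have hprod : x * (k * y ^ 2 * z ^ 2 - x - 2 * y ^ 2 - 2 * z ^ 2) = y ^ 4 + z ^ 4 := by
    linear_combination (t * y * z + x + y ^ 2 + z ^ 2) * h.mul_eq - y ^ 2 * z ^ 2 * h.sq_eq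
  have hy := h.y_pos
  have hpos : 0 < y ^ 4 + z ^ 4 := by positivity
  refine ⟨pos_of_mul_pos_right (a := x) (hprod ▸ hpos) h.x_pos.le, h.y_pos, h.z_pos,
    by linear_combination -h.mul_eq, by linear_combination h.sq_eq - 2 * k * h.mul_eq⟩

theorem sub_four_mul_x_eq (h : IsSolution k x y z t) :
    (k * z ^ 2 - 4) * x = (t * z - 2 * y) ^ 2 + 2 * z ^ 2 := by
  linear_combination 4 * h.mul_eq - z ^ 2 * h.sq_eq

theorem four_lt_mul_sq (h : IsSolution k x y z t) : 4 < k * z ^ 2 := by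
  have hz := h.z_pos
  have hpos : 0 < (k * z ^ 2 - 4) * x := by rw [h.sub_four_mul_x_eq]; positivity
  linarith [pos_of_mul_pos_left hpos h.x_pos.le]

theorem vieta_product (h : IsSolution k x y z t) :
    (2 * y - t * z) * (2 * y - (k * y * z - t) * z) =
      (k * z ^ 2 - 2) * z ^ 2 - (k * z ^ 2 - 4) * y ^ 2 := by
  linear_combination (-z ^ 2) * h.sq_eq + k * z ^ 2 * h.mul_eq

theorem k_eq_seven_of_diag (h : IsSolution k x z z t) : k = 7 := by
  have hz := h.z_pos
  have hx : x = (t - 2) * z ^ 2 := by linear_combination -h.mul_eq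
  have hu : 0 < t - 2 := pos_of_mul_pos_left (hx ▸ h.x_pos) (by positivity)
  have hkey : (t - 2) * (k * z ^ 2 - 4 - (t - 2)) = 2 := by
    have hid := h.sub_four_mul_x_eq
    rw [hx] at hid
    exact mul_right_cancel₀ (pow_ne_zero 2 hz.ne') (by linear_combination hid)
  have hu2 : t - 2 ≤ 2 := Int.le_of_dvd two_pos ⟨_, hkey.symm⟩
  have hkz : k * z ^ 2 = 7 := by
    obtain h1 | h2 : t - 2 = 1 ∨ t - 2 = 2 := by omega
    · rw [h1] at hkey; linarith
    · rw [h2] at hkey; linarith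
  have hk : 0 < k := pos_of_mul_pos_left (by rw [hkz]; norm_num) (sq_nonneg z)
  have hz2 : z ≤ 2 := by nlinarith
  interval_cases z <;> omega

theorem k_eq_seven_of_minimal (h : IsSolution k x y z t) (hzy : z ≤ y) (hy : y ≤ t * z - y)
    (ht : t ≤ k * y * z - t) : k = 7 := by
  obtain hlt | rfl := hzy.lt_or_eq
  · have hz := h.z_pos
    have hprod : 0 ≤ (2 * y - t * z) * (2 * y - (k * y * z - t) * z) :=
      mul_nonneg_of_nonpos_of_nonpos (by linarith) (by nlinarith)
    rw [h.vieta_product] at hprod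
    linarith [mul_sq_lt_sub_mul_sq hz hlt h.four_lt_mul_sq]
  · exact h.k_eq_seven_of_diag

theorem k_eq_seven {x y z t : ℤ} (h : IsSolution k x y z t) : k = 7 := by
  have hy0 := h.y_pos
  have hz0 := h.z_pos
  have ht0 := h.t_pos
  by_cases hy : t * z - y < y
  · exact h.jump_y.k_eq_seven
  by_cases hz : t * y - z < z
  · exact h.swap.jump_y.k_eq_seven
  by_cases ht : k * y * z - t < t
  · exact h.jump_t.k_eq_seven
  push Not at hy hz ht
  obtain hzy | hyz := le_total z y
  · exact h.k_eq_seven_of_minimal hzy (by linarith) (by linarith)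
  · exact h.swap.k_eq_seven_of_minimal hyz (by linarith) (by linarith)
termination_by (y + z + t).toNat
decreasing_by all_goals omega

end IsSolution

theorem stmt_3 (k : ℕ) :
    (∃ x₁ x₂ x₃ : ℕ, 0 < x₁ ∧ 0 < x₂ ∧ 0 < x₃ ∧
      x₁ ^ 2 + x₂ ^ 4 + x₃ ^ 4 + 2 * x₁ * x₂ ^ 2 + 2 * x₁ * x₃ ^ 2
        = k * x₁ * x₂ ^ 2 * x₃ ^ 2) ↔ k = 7 := by
  constructor
  · rintro ⟨x, y, z, hx, hy, hz, h⟩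
    obtain ⟨t, ht⟩ := exists_isSolution hx hy hz h
    exact_mod_cast ht.k_eq_seven
  · rintro rfl
    exact ⟨1, 1, 1, one_pos, one_pos, one_pos, by norm_num⟩
end

section
/- A positive integer triple (a₁, a₂, a₃) satisfies a₁² + a₂² + a₃² = a₁·a₂·a₃ if and only if 3 divides each aᵢ and (a₁/3, a₂/3, a₃/3) satisfies x₁² + x₂² + x₃² = 3·x₁·x₂·x₃. -/
/-!
Modulo 3 every square is 0 or 1, and a short case check shows that `x² + y² + z² = xyz` forces
`x = y = z = 0` in `ZMod 3`. So every solution of `a₁² + a₂² + a₃² = a₁a₂a₃` is `3` times a triple,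
and substituting `aᵢ = 3xᵢ` and cancelling the common factor `9` gives the Markov equation.
-/

theorem ZMod.eq_zero_of_sq_add_sq_add_sq_eq_mul_mul (x y z : ZMod 3)
    (h : x ^ 2 + y ^ 2 + z ^ 2 = x * y * z) : x = 0 ∧ y = 0 ∧ z = 0 := by
  revert x y z
  decide

theorem Nat.three_dvd_of_sq_add_sq_add_sq_eq_mul_mul {a b c : ℕ}
    (h : a ^ 2 + b ^ 2 + c ^ 2 = a * b * c) : 3 ∣ a ∧ 3 ∣ b ∧ 3 ∣ c := by
  have hmod : (a : ZMod 3) ^ 2 + (b : ZMod 3) ^ 2 + (c : ZMod 3) ^ 2 = a * b * c := by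
    exact_mod_cast congrArg (Nat.cast : ℕ → ZMod 3) h
  simpa only [ZMod.natCast_eq_zero_iff] using
    ZMod.eq_zero_of_sq_add_sq_add_sq_eq_mul_mul _ _ _ hmod

theorem sq_add_sq_add_sq_eq_mul_mul_three_mul_iff {R : Type*} [CommSemiring R]
    [IsLeftCancelMulZero R] [CharZero R] (x y z : R) :
    (3 * x) ^ 2 + (3 * y) ^ 2 + (3 * z) ^ 2 = 3 * x * (3 * y) * (3 * z) ↔
      x ^ 2 + y ^ 2 + z ^ 2 = 3 * x * y * z := by
  have h9 : (9 : R) ≠ 0 := by norm_num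
  conv_rhs => rw [← mul_right_inj' h9]
  ring_nf

theorem stmt_4_general (a₁ a₂ a₃ : ℕ) :
    a₁ ^ 2 + a₂ ^ 2 + a₃ ^ 2 = a₁ * a₂ * a₃ ↔
      (3 ∣ a₁ ∧ 3 ∣ a₂ ∧ 3 ∣ a₃ ∧
        (a₁ / 3) ^ 2 + (a₂ / 3) ^ 2 + (a₃ / 3) ^ 2
          = 3 * (a₁ / 3) * (a₂ / 3) * (a₃ / 3)) := by
  constructor
  · intro h
    obtain ⟨⟨x, rfl⟩, ⟨y, rfl⟩, ⟨z, rfl⟩⟩ := Nat.three_dvd_of_sq_add_sq_add_sq_eq_mul_mul h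
    simp only [Nat.mul_div_cancel_left _ three_pos]
    exact ⟨dvd_mul_right 3 x, dvd_mul_right 3 y, dvd_mul_right 3 z,
      (sq_add_sq_add_sq_eq_mul_mul_three_mul_iff x y z).1 h⟩
  · rintro ⟨⟨x, rfl⟩, ⟨y, rfl⟩, ⟨z, rfl⟩, h⟩
    simp only [Nat.mul_div_cancel_left _ three_pos] at h
    exact (sq_add_sq_add_sq_eq_mul_mul_three_mul_iff x y z).2 h

theorem stmt_4 (a₁ a₂ a₃ : ℕ) (h₁ : 0 < a₁) (h₂ : 0 < a₂) (h₃ : 0 < a₃) :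
    a₁ ^ 2 + a₂ ^ 2 + a₃ ^ 2 = a₁ * a₂ * a₃ ↔
      (3 ∣ a₁ ∧ 3 ∣ a₂ ∧ 3 ∣ a₃ ∧
        (a₁ / 3) ^ 2 + (a₂ / 3) ^ 2 + (a₃ / 3) ^ 2
          = 3 * (a₁ / 3) * (a₂ / 3) * (a₃ / 3)) :=
  stmt_4_general a₁ a₂ a₃
end

section
/- For every natural number k ≥ 4, if (a, b) is a positive integer solution of x₁² + x₂² + 1 = k·x₁·x₂ with a ≥ b, then b ≥ 2; moreover ((b²+1)/a, b) is again a positive integer solution and (b²+1)/a < b. -/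
/-!
Vieta jumping: viewed as a quadratic in `a`, the equation `a² + b² + 1 = k a b` has the second
root `c = k b - a`, and Vieta's formulas give `a c = b² + 1`, so `c = (b² + 1) / a` is a positive
integer solving the same equation. For `k ≥ 4` neither `b = 1` nor `a = b` is possible (both force
`k = 3`), so `a > b ≥ 2`, and then `a c = b² + 1 < (b + 1) b` gives `c < b`.
-/

namespace VietaJump

variable {k a b : ℕ}

theorem lt_mul_of_sq_add_sq_add_one_eq (h : a ^ 2 + b ^ 2 + 1 = k * a * b) : a < k * b :=
  Nat.lt_of_mul_lt_mul_left (a := a) (by nlinarith)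

theorem mul_partner_eq (h : a ^ 2 + b ^ 2 + 1 = k * a * b) : a * (k * b - a) = b ^ 2 + 1 := by
  have hlt := lt_mul_of_sq_add_sq_add_one_eq h
  zify [hlt.le] at h ⊢
  linear_combination -h

theorem partner_sq_add_sq_add_one_eq (h : a ^ 2 + b ^ 2 + 1 = k * a * b) :
    (k * b - a) ^ 2 + b ^ 2 + 1 = k * (k * b - a) * b := by
  have hlt := lt_mul_of_sq_add_sq_add_one_eq h
  zify [hlt.le] at h ⊢
  linear_combination h

theorem eq_three_of_right_eq_one (h : a ^ 2 + 1 ^ 2 + 1 = k * a * 1) : k = 3 := by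
  have ha2 : a ∣ 2 := (Nat.dvd_add_right (dvd_pow_self a two_ne_zero)).mp ⟨k, by linarith⟩
  have : a ≤ 2 := Nat.le_of_dvd two_pos ha2
  interval_cases a <;> omega

theorem eq_three_of_eq (h : a ^ 2 + a ^ 2 + 1 = k * a * a) : k = 3 := by
  have ha1 : a ^ 2 ∣ 1 :=
    (Nat.dvd_add_right (dvd_add dvd_rfl dvd_rfl)).mp ⟨k, by rw [h]; ring⟩
  have : a = 1 := by simpa using ha1
  subst this
  omega

theorem lt_of_mul_eq_sq_add_one {c : ℕ} (hc : a * c = b ^ 2 + 1) (hba : b < a) (hb : 2 ≤ b) :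
    c < b := by
  by_contra! hbc
  nlinarith [Nat.mul_le_mul hba hbc]

end VietaJump

open VietaJump in
theorem stmt_5_general (k a b : ℕ) (hk : 4 ≤ k)
    (heq : a ^ 2 + b ^ 2 + 1 = k * a * b) (hab : a ≥ b) :
    2 ≤ b ∧ a ∣ b ^ 2 + 1 ∧ 0 < (b ^ 2 + 1) / a ∧
      ((b ^ 2 + 1) / a) ^ 2 + b ^ 2 + 1 = k * ((b ^ 2 + 1) / a) * b ∧
      (b ^ 2 + 1) / a < b := by
  have hb : 2 ≤ b := by
    by_contra! hb
    obtain rfl | rfl : b = 0 ∨ b = 1 := by omega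
    · simp at heq
    · have := eq_three_of_right_eq_one heq; omega
  have hba : b < a := lt_of_le_of_ne hab fun hab => by
    subst hab; have := eq_three_of_eq heq; omega
  have hac := mul_partner_eq heq
  have hdiv : (b ^ 2 + 1) / a = k * b - a := by
    rw [← hac, Nat.mul_div_cancel_left _ (by omega)]
  rw [hdiv]
  exact ⟨hb, ⟨_, hac.symm⟩, Nat.pos_of_ne_zero fun h0 => by simp [h0] at hac,
    partner_sq_add_sq_add_one_eq heq, lt_of_mul_eq_sq_add_one hac hba hb⟩

theorem stmt_5 (k a b : ℕ) (hk : 4 ≤ k) (ha : 0 < a) (hb : 0 < b)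
    (heq : a ^ 2 + b ^ 2 + 1 = k * a * b) (hab : a ≥ b) :
    2 ≤ b ∧ a ∣ b ^ 2 + 1 ∧ 0 < (b ^ 2 + 1) / a ∧
      ((b ^ 2 + 1) / a) ^ 2 + b ^ 2 + 1 = k * ((b ^ 2 + 1) / a) * b ∧
      (b ^ 2 + 1) / a < b :=
  stmt_5_general k a b hk heq hab
end

section
/- There is no positive integer solution of x₂⁴ + x₁² + 2x₁ + 1 = 3·x₁·x₂². -/
/-!
Multiplying by 4 and completing the square in x₁ turns the equation into
(2x₁ + 2 - 3x₂²)² = x₂²(5x₂² - 12). Since x₂ ≠ 0, the integer 5x₂² - 12 is then itself a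
square, which is impossible because 5x₂² - 12 ≡ 3 is not a square modulo 5.
-/

lemma ZMod.sq_ne_three_five (y : ZMod 5) : y ^ 2 ≠ 3 := by
  revert y; decide

lemma Int.sq_ne_five_mul_sq_sub_twelve (m b : ℤ) : m ^ 2 ≠ 5 * b ^ 2 - 12 := by
  intro h
  apply ZMod.sq_ne_three_five (m : ZMod 5)
  have hmod := congrArg (fun z : ℤ => (z : ZMod 5)) h
  push_cast at hmod
  rw [hmod, show (5 : ZMod 5) = 0 from rfl, zero_mul, zero_sub]
  decide

lemma Int.exists_sq_of_sq_eq_sq_mul {k b c : ℤ} (hb : b ≠ 0) (h : k ^ 2 = b ^ 2 * c) :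
    ∃ m, m ^ 2 = c := by
  obtain ⟨m, rfl⟩ : b ∣ k := (Int.pow_dvd_pow_iff two_ne_zero).mp ⟨c, h⟩
  refine ⟨m, mul_left_cancel₀ (pow_ne_zero 2 hb) ?_⟩
  rw [← h]; ring

lemma Int.pow_four_add_sq_add_two_mul_add_one_ne {a b : ℤ} (hb : b ≠ 0) :
    b ^ 4 + a ^ 2 + 2 * a + 1 ≠ 3 * a * b ^ 2 := by
  intro h
  have hsq : (2 * a + 2 - 3 * b ^ 2) ^ 2 = b ^ 2 * (5 * b ^ 2 - 12) := by
    linear_combination 4 * h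
  obtain ⟨m, hm⟩ := Int.exists_sq_of_sq_eq_sq_mul hb hsq
  exact Int.sq_ne_five_mul_sq_sub_twelve m b hm

theorem stmt_8 :
    ¬ ∃ x₁ x₂ : ℕ, 0 < x₁ ∧ 0 < x₂ ∧
      x₂ ^ 4 + x₁ ^ 2 + 2 * x₁ + 1 = 3 * x₁ * x₂ ^ 2 := by
  rintro ⟨x₁, x₂, -, hx₂, h⟩
  exact Int.pow_four_add_sq_add_two_mul_add_one_ne (a := x₁) (b := x₂) (by positivity)
    (by exact_mod_cast h)
end

section
/- There is no positive integer solution of x₂⁴ + x₁² + 2x₁ + 1 = 4·x₁·x₂². -/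
/-!
Viewed as a quadratic in `x₁`, the equation becomes
`(x₁ + 1 - 2 x₂²)² = x₂² (3 x₂² - 4)`, so `3 x₂² - 4` is the square of a rational, hence of
an integer. But `3 x₂² - 4 ≡ 2 (mod 3)` is not a square modulo 3.
-/

theorem Int.sq_ne_three_mul_add_two (c k : ℤ) : c ^ 2 ≠ 3 * k + 2 := by
  intro h
  have hmod : (c : ZMod 3) ^ 2 = 2 := by
    simpa [show (3 : ZMod 3) = 0 from rfl] using congrArg (Int.cast : ℤ → ZMod 3) h
  generalize (c : ZMod 3) = z at hmod
  revert z
  decide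

theorem Int.isSquare_of_sq_eq_sq_mul {s t m : ℤ} (hs : s ≠ 0) (h : t ^ 2 = s ^ 2 * m) :
    IsSquare m := by
  obtain ⟨c, rfl⟩ : s ∣ t := (Int.pow_dvd_pow_iff two_ne_zero).mp ⟨m, h⟩
  refine ⟨c, mul_left_cancel₀ (pow_ne_zero 2 hs) ?_⟩
  linear_combination -h

theorem stmt_9 :
    ¬ ∃ x₁ x₂ : ℕ, 0 < x₁ ∧ 0 < x₂ ∧
      x₂ ^ 4 + x₁ ^ 2 + 2 * x₁ + 1 = 4 * x₁ * x₂ ^ 2 := by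
  rintro ⟨a, b, -, hb, h⟩
  have hz : ((a : ℤ) + 1 - 2 * b ^ 2) ^ 2 = (b : ℤ) ^ 2 * (3 * b ^ 2 - 4) := by
    have h' : (b : ℤ) ^ 4 + a ^ 2 + 2 * a + 1 = 4 * a * b ^ 2 := by exact_mod_cast h
    linear_combination h'
  obtain ⟨c, hc⟩ := Int.isSquare_of_sq_eq_sq_mul (by positivity) hz
  exact Int.sq_ne_three_mul_add_two c (b ^ 2 - 2) (by linear_combination hc.symm)
end

section
/- If k ≥ 6 and (a, b) is a positive integer solution of x₂⁴ + x₁² + 2x₁ + 1 = k·x₁·x₂² with a ≠ 1 and b ≠ 1, then a ≠ b², and: if a > b² then (b⁴+1)/a < b², while if a < b² then (b⁴+1)/a > b². -/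
/-! Reduced modulo `a`, the equation says `a ∣ b⁴ + 1 = (b²)² + 1`. A number of the form
`m² + 1` with `m ≥ 2` is not divisible by `m`, and division by any `a ≠ m` lands on the other
side of `m`, since `(m + 1) m > m² + 1 ≥ (m - 1)(m + 1)`. -/

theorem dvd_pow_four_add_one_of_eq {k a b : ℕ}
    (h : b ^ 4 + a ^ 2 + 2 * a + 1 = k * a * b ^ 2) : a ∣ b ^ 4 + 1 := by
  have hsum : a ∣ (b ^ 4 + 1) + a * (a + 2) := ⟨k * b ^ 2, by linarith [h]⟩
  exact (Nat.dvd_add_left (dvd_mul_right a _)).mp hsum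

theorem ne_of_dvd_sq_add_one {a m : ℕ} (hm : m ≠ 1) (h : a ∣ m ^ 2 + 1) : a ≠ m := by
  rintro rfl
  exact hm (Nat.dvd_one.mp ((Nat.dvd_add_right (dvd_pow_self a two_ne_zero)).mp h))

theorem sq_add_one_div_lt {a m : ℕ} (hm : 2 ≤ m) (ha : m < a) : (m ^ 2 + 1) / a < m := by
  rw [Nat.div_lt_iff_lt_mul (by omega)]
  nlinarith

theorem lt_sq_add_one_div {a m : ℕ} (ha : 0 < a) (ham : a < m) : m < (m ^ 2 + 1) / a :=
  (Nat.le_div_iff_mul_le ha).mpr (by nlinarith)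

theorem stmt_12_general (k a b : ℕ) (ha : 0 < a) (hb : 0 < b)
    (hb1 : b ≠ 1)
    (heq : b ^ 4 + a ^ 2 + 2 * a + 1 = k * a * b ^ 2) :
    a ≠ b ^ 2 ∧
      (a > b ^ 2 → (b ^ 4 + 1) / a < b ^ 2) ∧
      (a < b ^ 2 → (b ^ 4 + 1) / a > b ^ 2) := by
  have hb2 : 2 ≤ b ^ 2 := by nlinarith [show 2 ≤ b by omega]
  have hdvd := dvd_pow_four_add_one_of_eq heq
  rw [show b ^ 4 = (b ^ 2) ^ 2 by ring] at hdvd ⊢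
  exact ⟨ne_of_dvd_sq_add_one (by omega) hdvd, sq_add_one_div_lt hb2, lt_sq_add_one_div ha⟩

theorem stmt_12 (k a b : ℕ) (hk : 6 ≤ k) (ha : 0 < a) (hb : 0 < b)
    (ha1 : a ≠ 1) (hb1 : b ≠ 1)
    (heq : b ^ 4 + a ^ 2 + 2 * a + 1 = k * a * b ^ 2) :
    a ≠ b ^ 2 ∧
      (a > b ^ 2 → (b ^ 4 + 1) / a < b ^ 2) ∧
      (a < b ^ 2 → (b ^ 4 + 1) / a > b ^ 2) :=
  stmt_12_general k a b ha hb hb1 heq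
end

section
/- If k ≥ 6 and (a, b) is a positive integer solution of x₂⁴ + x₁² + 2x₁ + 1 = k·x₁·x₂² with a ≠ 1 and b ≠ 1, then setting b' = (a+1)/b (a positive integer): if a > b² then (b')² > a, while if a < b² then (b')² < a. -/
/-!
Since `(a + 1)² + b⁴ = k a b²`, `b²` divides `(a + 1)²`, so `a + 1 = b c` for a natural number `c`,
and dividing by `b²` turns the equation into the Markov-type equation `b² + c² + k = k b c`.
If `a > b²` then `c > b`, so `c² > b c > a`. If `a < b²` then `c ≤ b`; the cases `c = b` and
`(b, c) = (2, 1)` are incompatible with the equation when `k ≥ 6`, and otherwise `c (b - c) ≥ 2`,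
i.e. `c² < b c - 1 = a`.
-/

theorem dvd_add_one_of_pow_four_add_sq_eq {k a b : ℕ}
    (heq : b ^ 4 + a ^ 2 + 2 * a + 1 = k * a * b ^ 2) : b ∣ a + 1 := by
  have hsq_add : (a + 1) ^ 2 + b ^ 4 = k * a * b ^ 2 := by rw [← heq]; ring
  have hsum : b ^ 2 ∣ (a + 1) ^ 2 + b ^ 4 := hsq_add ▸ dvd_mul_left _ _
  have hsq : b ^ 2 ∣ (a + 1) ^ 2 := (Nat.dvd_add_left ⟨b ^ 2, by ring⟩).mp hsum
  exact (Nat.pow_dvd_pow_iff two_ne_zero).mp hsq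

theorem sq_add_sq_add_eq_of_add_one_eq_mul {k a b c : ℕ}
    (heq : b ^ 4 + a ^ 2 + 2 * a + 1 = k * a * b ^ 2) (hc : a + 1 = b * c) :
    b ^ 2 + c ^ 2 + k = k * b * c := by
  have hb : 0 < b := Nat.pos_of_mul_pos_right (lt_of_lt_of_eq a.succ_pos hc)
  have hka : b ^ 2 + c ^ 2 = k * a := by
    refine Nat.eq_of_mul_eq_mul_left (pow_pos hb 2) ?_
    have hsq : (a + 1) ^ 2 = b ^ 2 * c ^ 2 := by rw [hc]; ring
    nlinarith
  calc b ^ 2 + c ^ 2 + k = k * (a + 1) := by rw [hka]; ring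
    _ = k * b * c := by rw [hc]; ring

theorem lt_sq_of_sq_lt_of_add_one_eq_mul {a b c : ℕ} (hc : a + 1 = b * c) (hab : b ^ 2 < a) :
    a < c ^ 2 := by
  have hbc : b < c := by nlinarith
  nlinarith

theorem sq_add_one_lt_mul_of_mul_le_sq {k b c : ℕ} (hk : 6 ≤ k)
    (h : b ^ 2 + c ^ 2 + k = k * b * c) (hcb : b * c ≤ b ^ 2) : c ^ 2 + 1 < b * c := by
  have hkbc : 0 < k * b * c := by rw [← h]; omega
  have hb : 0 < b := Nat.pos_of_mul_pos_left (Nat.pos_of_mul_pos_right hkbc)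
  have hc : 0 < c := Nat.pos_of_mul_pos_left hkbc
  have hlt : c < b := by
    have hle : c ≤ b := by nlinarith
    refine lt_of_le_of_ne hle fun hceq => ?_
    subst hceq
    have hc2 : 2 ≤ c := by
      by_contra! hc1
      interval_cases c
      omega
    have hc4 : 4 ≤ c ^ 2 := by nlinarith
    nlinarith [Nat.mul_le_mul_right (c ^ 2) hk, Nat.mul_le_mul_left k hc4]
  rcases Nat.lt_or_ge c 2 with hc1 | hc2
  · obtain rfl : c = 1 := by omega
    have hb3 : 3 ≤ b := by
      by_contra! hb2
      obtain rfl : b = 2 := by omega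
      omega
    omega
  · nlinarith

theorem stmt_13_general (k a b : ℕ) (hk : 6 ≤ k)
    (heq : b ^ 4 + a ^ 2 + 2 * a + 1 = k * a * b ^ 2) :
    b ∣ a + 1 ∧ 0 < (a + 1) / b ∧
      (a > b ^ 2 → ((a + 1) / b) ^ 2 > a) ∧
      (a < b ^ 2 → ((a + 1) / b) ^ 2 < a) := by
  obtain ⟨c, hc⟩ := dvd_add_one_of_pow_four_add_sq_eq heq
  have hbc : 0 < b * c := lt_of_lt_of_eq a.succ_pos hc
  have hdiv : (a + 1) / b = c := by
    rw [hc, Nat.mul_div_cancel_left c (Nat.pos_of_mul_pos_right hbc)]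
  have hmarkov := sq_add_sq_add_eq_of_add_one_eq_mul heq hc
  rw [hdiv]
  refine ⟨⟨c, hc⟩, Nat.pos_of_mul_pos_left hbc, lt_sq_of_sq_lt_of_add_one_eq_mul hc, fun hab => ?_⟩
  have := sq_add_one_lt_mul_of_mul_le_sq hk hmarkov (by omega)
  omega

theorem stmt_13 (k a b : ℕ) (hk : 6 ≤ k) (ha : 0 < a) (hb : 0 < b)
    (ha1 : a ≠ 1) (hb1 : b ≠ 1)
    (heq : b ^ 4 + a ^ 2 + 2 * a + 1 = k * a * b ^ 2) :
    b ∣ a + 1 ∧ 0 < (a + 1) / b ∧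
      (a > b ^ 2 → ((a + 1) / b) ^ 2 > a) ∧
      (a < b ^ 2 → ((a + 1) / b) ^ 2 < a) :=
  stmt_13_general k a b hk heq
end
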